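/- arXiv:1612.02273 — 3 statements merged into one kernel-verified Lean document; each statement's English description precedes it below -/
import Mathlib

section
/- The block matrix H = -(1/ε)·[[diag(u₀ ⊙ (K u₁)), diag(u₀) K diag(u₁)], [diag(u₁) Kᵀ diag(u₀), diag(u₁ ⊙ (Kᵀ u₀))]] is negative semidefinite whenever u₀, u₁ have positive entries, K has positive entries, and ε > 0. -/
/-!
With weights `w i j = u₀ i * K i j * u₁ j > 0`, the matrix `-ε H` is the signless Laplacian
`[[diag (row sums of w), w], [wᵀ, diag (column sums of w)]]` of the complete bipartite graph with
edge weights `w`. Its quadratic form at `(a, b)` is `∑ i j, w i j * (a i + b j) ^ 2 ≥ 0`.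
-/

open Finset

namespace Matrix

variable {m n R : Type*} [Fintype m] [Fintype n] [DecidableEq m] [DecidableEq n] [CommRing R]

def bipartiteSignlessLaplacian (W : Matrix m n R) : Matrix (m ⊕ n) (m ⊕ n) R :=
  fromBlocks (diagonal fun i => ∑ j, W i j) W Wᵀ (diagonal fun j => ∑ i, W i j)

theorem isHermitian_bipartiteSignlessLaplacian [StarRing R] [TrivialStar R] (W : Matrix m n R) :
    W.bipartiteSignlessLaplacian.IsHermitian :=
  (isHermitian_diagonal _).fromBlocks (conjTranspose_eq_transpose_of_trivial W)
    (isHermitian_diagonal _)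

theorem dotProduct_bipartiteSignlessLaplacian_mulVec (W : Matrix m n R) (x : m ⊕ n → R) :
    x ⬝ᵥ (W.bipartiteSignlessLaplacian *ᵥ x) =
      ∑ i, ∑ j, W i j * (x (.inl i) + x (.inr j)) ^ 2 := by
  rw [bipartiteSignlessLaplacian, fromBlocks_mulVec, ← Sum.elim_comp_inl_inr x,
    sumElim_dotProduct_sumElim]
  simp only [dotProduct, mulVec, diagonal_apply, transpose_apply, Pi.add_apply,
    Function.comp_apply, Sum.elim_inl, Sum.elim_inr, ite_mul, zero_mul, sum_ite_eq,
    mem_univ, if_true, mul_add, sum_add_distrib, mul_sum, sum_mul]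
  rw [sum_comm (γ := n), sum_comm (γ := n), ← sum_add_distrib, ← sum_add_distrib,
    ← sum_add_distrib]
  refine sum_congr rfl fun i _ => ?_
  rw [← sum_add_distrib, ← sum_add_distrib, ← sum_add_distrib]
  exact sum_congr rfl fun j _ => by ring

theorem posSemidef_bipartiteSignlessLaplacian [PartialOrder R] [IsOrderedRing R]
    [StarRing R] [StarOrderedRing R] [TrivialStar R] {W : Matrix m n R} (hW : ∀ i j, 0 ≤ W i j) :
    W.bipartiteSignlessLaplacian.PosSemidef := by
  refine .of_dotProduct_mulVec_nonneg (isHermitian_bipartiteSignlessLaplacian W) fun x => ?_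
  rw [star_trivial, dotProduct_bipartiteSignlessLaplacian_mulVec]
  exact sum_nonneg fun i _ => sum_nonneg fun j _ => mul_nonneg (hW i j)
    (by simpa only [star_trivial, ← sq] using star_mul_self_nonneg (_ : R))

theorem bipartiteSignlessLaplacian_diagonal_mul_mul_diagonal (u : m → R) (K : Matrix m n R)
    (v : n → R) :
    (diagonal u * K * diagonal v).bipartiteSignlessLaplacian =
      fromBlocks (diagonal fun i => u i * ∑ j, K i j * v j) (diagonal u * K * diagonal v)
        (diagonal v * Kᵀ * diagonal u) (diagonal fun j => v j * ∑ i, K i j * u i) := by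
  simp only [bipartiteSignlessLaplacian, transpose_mul, diagonal_transpose, Matrix.mul_assoc,
    diagonal_mul, mul_diagonal, mul_sum]
  congr 2 <;> ext <;> exact sum_congr rfl fun _ _ => by ring

end Matrix

open Matrix in
/-- The Hessian of the dual barrier term, the block matrix
`H = -(1/ε)[[diag(u₀⊙(Ku₁)), diag(u₀)K diag(u₁)],[diag(u₁)Kᵀdiag(u₀), diag(u₁⊙(Kᵀu₀))]]`,
is negative semidefinite (stated as: `-H` is positive semidefinite). -/
theorem dual_barrier_hessian_negSemidef (n₀ n₁ : ℕ) (ε : ℝ) (hε : 0 < ε)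
    (K : Matrix (Fin n₀) (Fin n₁) ℝ) (hK : ∀ i j, 0 < K i j)
    (u₀ : Fin n₀ → ℝ) (u₁ : Fin n₁ → ℝ) (hu₀ : ∀ i, 0 < u₀ i) (hu₁ : ∀ j, 0 < u₁ j) :
    (-((-(1 / ε)) • Matrix.fromBlocks
      (Matrix.diagonal fun i => u₀ i * ∑ j, K i j * u₁ j)
      (Matrix.diagonal u₀ * K * Matrix.diagonal u₁)
      (Matrix.diagonal u₁ * K.transpose * Matrix.diagonal u₀)
      (Matrix.diagonal fun j => u₁ j * ∑ i, K i j * u₀ i))).PosSemidef := by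
  have hW : ∀ i j, 0 ≤ (diagonal u₀ * K * diagonal u₁) i j := fun i j => by
    simpa only [diagonal_mul, mul_diagonal] using (mul_pos (mul_pos (hu₀ i) (hK i j)) (hu₁ j)).le
  rw [neg_smul, neg_neg, ← bipartiteSignlessLaplacian_diagonal_mul_mul_diagonal]
  exact (posSemidef_bipartiteSignlessLaplacian hW).smul (one_div_pos.2 hε).le
end

section
/- Weak duality holds between the entropy-regularized transport problem and its dual: for any M with positive entries satisfying μ₀ = M1 and μ₁ = Mᵀ1, and any λ₀ ∈ ℝ^{n₀}, λ₁ ∈ ℝ^{n₁}, one has trace(CᵀM) + εD(M) ≥ λ₀ᵀμ₀ + λ₁ᵀμ₁ - ε exp(λ₀/ε)ᵀ exp(-C/ε) exp(λ₁/ε) + ε n₀ n₁. -/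
/-!
Entrywise Fenchel–Young: the convex conjugate of `x ↦ x log x - x` is `exp`, so
`s a - ε exp (s / ε) ≤ ε (a log a - a)` for every `a ≥ 0`. Take `s = λ₀ᵢ + λ₁ⱼ - Cᵢⱼ`, `a = Mᵢⱼ`,
and sum over all entries; the marginal constraints turn `∑ (λ₀ᵢ + λ₁ⱼ) Mᵢⱼ` into
`λ₀ᵀμ₀ + λ₁ᵀμ₁`, and the constants `+1` add up to `n₀ n₁`.
-/

open Finset Real

theorem Real.mul_le_mul_log_sub_add_exp {a : ℝ} (ha : 0 ≤ a) (t : ℝ) :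
    a * t ≤ a * log a - a + exp t := by
  rcases ha.eq_or_lt with rfl | ha
  · simpa using (exp_pos t).le
  have h : t - log a + 1 ≤ exp t / a := by
    simpa [exp_sub, exp_log ha] using add_one_le_exp (t - log a)
  calc a * t = a * (t - log a + 1) + a * log a - a := by ring
    _ ≤ a * (exp t / a) + a * log a - a := by gcongr
    _ = a * log a - a + exp t := by field_simp; ring

theorem Real.mul_sub_mul_exp_div_le {ε a : ℝ} (hε : 0 < ε) (ha : 0 ≤ a) (s : ℝ) :
    s * a - ε * exp (s / ε) ≤ ε * (a * log a - a) := by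
  have h := mul_le_mul_of_nonneg_left (mul_le_mul_log_sub_add_exp ha (s / ε)) hε.le
  have hs : ε * (a * (s / ε)) = s * a := by field_simp
  linarith

theorem sum_mul_add_sum_mul_eq_sum_sum {ι κ : Type*} [Fintype ι] [Fintype κ]
    {M : ι → κ → ℝ} {μ₀ : ι → ℝ} {μ₁ : κ → ℝ}
    (hrow : ∀ i, ∑ j, M i j = μ₀ i) (hcol : ∀ j, ∑ i, M i j = μ₁ j) (lam₀ : ι → ℝ)
    (lam₁ : κ → ℝ) :
    ∑ i, lam₀ i * μ₀ i + ∑ j, lam₁ j * μ₁ j = ∑ i, ∑ j, (lam₀ i + lam₁ j) * M i j := by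
  simp_rw [← hrow, ← hcol, mul_sum, add_mul, sum_add_distrib]
  rw [sum_comm (f := fun j i => lam₁ j * M i j)]

/-- Weak duality for the entropy-regularized transport problem: any feasible positive `M`
has primal value at least the dual objective value, for any `λ₀, λ₁`. -/
theorem entropic_weak_duality (n₀ n₁ : ℕ) (ε : ℝ) (hε : 0 < ε)
    (C : Matrix (Fin n₀) (Fin n₁) ℝ) (μ₀ : Fin n₀ → ℝ) (μ₁ : Fin n₁ → ℝ)
    (M : Matrix (Fin n₀) (Fin n₁) ℝ) (hMpos : ∀ i j, 0 < M i j)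
    (hrow : ∀ i, ∑ j, M i j = μ₀ i) (hcol : ∀ j, ∑ i, M i j = μ₁ j) :
    ∀ (lam₀ : Fin n₀ → ℝ) (lam₁ : Fin n₁ → ℝ),
      ∑ i, lam₀ i * μ₀ i + ∑ j, lam₁ j * μ₁ j
        - ε * ∑ i, ∑ j, Real.exp (lam₀ i / ε) * Real.exp (-C i j / ε) * Real.exp (lam₁ j / ε)
        + ε * n₀ * n₁
      ≤ ∑ i, ∑ j, C i j * M i j
        + ε * ∑ i, ∑ j, (M i j * Real.log (M i j) - M i j + 1) := by
  intro lam₀ lam₁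
  have hexp : ∀ i j, exp (lam₀ i / ε) * exp (-C i j / ε) * exp (lam₁ j / ε)
      = exp ((lam₀ i + lam₁ j - C i j) / ε) := by
    intro i j
    rw [← exp_add, ← exp_add]
    congr 1
    ring
  have hentry : ∀ i j, (lam₀ i + lam₁ j) * M i j - ε * exp ((lam₀ i + lam₁ j - C i j) / ε) + ε
      ≤ C i j * M i j + ε * (M i j * log (M i j) - M i j + 1) := by
    intro i j
    linarith [mul_sub_mul_exp_div_le hε (hMpos i j).le (lam₀ i + lam₁ j - C i j)]
  rw [sum_mul_add_sum_mul_eq_sum_sum hrow hcol]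
  calc _ = ∑ i, ∑ j,
          ((lam₀ i + lam₁ j) * M i j - ε * exp ((lam₀ i + lam₁ j - C i j) / ε) + ε) := by
        simp only [hexp, sum_add_distrib, sum_sub_distrib, mul_sum, sum_const, card_univ,
          Fintype.card_fin, nsmul_eq_mul]
        ring
    _ ≤ ∑ i, ∑ j, (C i j * M i j + ε * (M i j * log (M i j) - M i j + 1)) :=
        sum_le_sum fun i _ => sum_le_sum fun j _ => hentry i j
    _ = _ := by simp only [mul_sum, ← sum_add_distrib]
end

section
/- For g(x) = (1/(2σ))‖x - μ₁‖₂² and ε > 0, the entropic proximal Prox^{KL}_{ε⁻¹g}(z) := argmin_x ε⁻¹ g(x) + D(x|z), where D(x|z) = Σ_i (x_i log(x_i/z_i) - x_i + z_i), evaluated at a positive vector z, is given entrywise by σε·ω(μ₁(i)/(σε) + log(z_i/(σε))), where ω is the Wright omega function. -/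
/-!
Each coordinate of the objective is the scalar function
`φ(t) = (t - μ)² / (2τ) + (t log (t / z) - t + z)` with `τ = σε`. The defining equation
`c = log ω(c) + ω(c)` of the Wright omega function, at `c = μ / τ + log (z / τ)`, says exactly
that `s = τ ω(c)` is a critical point of `φ`. At a critical point, `φ(t) - φ(s)` equals the
exact quadratic gap `(t - s)² / (2τ)` plus the Bregman divergence `t log (t / s) - t + s ≥ 0`
of the entropy, so `s` is the strict minimiser of every coordinate and hence of the sum.
-/

open Real Finset

lemma sub_le_mul_log_div {s t : ℝ} (hs : 0 < s) (ht : 0 < t) : t - s ≤ t * log (t / s) := by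
  have h := one_sub_inv_le_log_of_pos (div_pos ht hs)
  rw [inv_div] at h
  calc t - s = t * (1 - s / t) := by field_simp
    _ ≤ t * log (t / s) := mul_le_mul_of_nonneg_left h ht.le

noncomputable def proxObjective (τ μ z t : ℝ) : ℝ :=
  (t - μ) ^ 2 / (2 * τ) + (t * log (t / z) - t + z)

lemma proxObjective_add_sq_le {τ μ z s t : ℝ} (hz : z ≠ 0) (hs : 0 < s) (ht : 0 < t)
    (hcrit : (s - μ) / τ + log (s / z) = 0) :
    proxObjective τ μ z s + (t - s) ^ 2 / (2 * τ) ≤ proxObjective τ μ z t := by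
  have hbregman := sub_le_mul_log_div hs ht
  unfold proxObjective
  rw [log_div ht.ne' hs.ne'] at hbregman
  rw [log_div hs.ne' hz] at hcrit ⊢
  rw [log_div ht.ne' hz]
  linear_combination hbregman + (s - t) * hcrit

lemma sum_proxObjective_lt_of_ne {ι : Type*} [Fintype ι] {τ : ℝ} (hτ : 0 < τ)
    {μ z s t : ι → ℝ} (hz : ∀ i, z i ≠ 0) (hs : ∀ i, 0 < s i) (ht : ∀ i, 0 < t i)
    (hcrit : ∀ i, (s i - μ i) / τ + log (s i / z i) = 0) (hne : t ≠ s) :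
    ∑ i, proxObjective τ (μ i) (z i) (s i) < ∑ i, proxObjective τ (μ i) (z i) (t i) := by
  obtain ⟨j, hj⟩ := Function.ne_iff.mp hne
  have hgap : 0 < ∑ i, (t i - s i) ^ 2 / (2 * τ) :=
    sum_pos' (fun i _ => by positivity)
      ⟨j, mem_univ j, div_pos (sq_pos_of_ne_zero (sub_ne_zero.mpr hj)) (by positivity)⟩
  have hle := sum_le_sum fun i (_ : i ∈ univ) =>
    proxObjective_add_sq_le (t := t i) (hz i) (hs i) (ht i) (hcrit i)
  rw [sum_add_distrib] at hle
  linarith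

lemma wrightOmega_critical {τ μ z w : ℝ} (hτ : τ ≠ 0) (hz : z ≠ 0) (hw : w ≠ 0)
    (h : μ / τ + log (z / τ) = log w + w) :
    (τ * w - μ) / τ + log (τ * w / z) = 0 := by
  rw [log_div hz hτ] at h
  rw [log_div (mul_ne_zero hτ hw) hz, log_mul hτ hw, sub_div, mul_div_cancel_left₀ w hτ]
  linear_combination -h

/-- The entropic proximal of `g(x) = (1/(2σ))‖x-μ₁‖₂²` at a positive vector `z` is given
entrywise by `σε·ω(μ₁(i)/(σε) + log(z_i/(σε)))`, where `ω` is the Wright omega function. -/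
theorem entropic_prox_quadratic (n : ℕ) (σ ε : ℝ) (hσ : 0 < σ) (hε : 0 < ε)
    (μ₁ z : Fin n → ℝ) (hz : ∀ i, 0 < z i)
    (ω : ℝ → ℝ) (hω : ∀ x, 0 < ω x ∧ x = Real.log (ω x) + ω x)
    (F : (Fin n → ℝ) → ℝ)
    (hF : ∀ x, F x = ε⁻¹ * ((1 / (2 * σ)) * ∑ i, (x i - μ₁ i) ^ 2)
        + ∑ i, (x i * Real.log (x i / z i) - x i + z i))
    (xstar : Fin n → ℝ)
    (hxstar : ∀ i, xstar i = σ * ε * ω (μ₁ i / (σ * ε) + Real.log (z i / (σ * ε)))) :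
    (∀ i, 0 < xstar i) ∧
    (∀ x : Fin n → ℝ, (∀ i, 0 < x i) → x ≠ xstar → F xstar < F x) := by
  have hτ : 0 < σ * ε := mul_pos hσ hε
  have hpos : ∀ i, 0 < xstar i := fun i => hxstar i ▸ mul_pos hτ (hω _).1
  have hcrit : ∀ i, (xstar i - μ₁ i) / (σ * ε) + log (xstar i / z i) = 0 := fun i => by
    rw [hxstar i]
    exact wrightOmega_critical hτ.ne' (hz i).ne' (hω _).1.ne' (hω _).2
  have hF_sum : ∀ x, F x = ∑ i, proxObjective (σ * ε) (μ₁ i) (z i) (x i) := fun x => by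
    rw [hF, mul_sum, mul_sum, ← sum_add_distrib]
    refine sum_congr rfl fun i _ => ?_
    unfold proxObjective
    ring
  refine ⟨hpos, fun x hx hne => ?_⟩
  rw [hF_sum, hF_sum]
  exact sum_proxObjective_lt_of_ne hτ (fun i => (hz i).ne') hpos hx hcrit hne
end
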